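/- Suppose that for every ε > 0 there exists a constant k_ε > 0 such that for all n > 2, ( ∏ over coprime pairs (x,y), x+y=n, x<y, of rad(x·y·n) )^(2/φ(n)) > k_ε · rad(n)^(1-ε) · n². Then for every θ > 0 there exists a constant K_θ > 0 such that for all n > 2, ( ∏ over 1 ≤ m < n with gcd(m,n)=1 of rad(m) )^(1/φ(n)) > K_θ · rad(n)^(-θ) · n. -/

import Mathlib

def rad (m : ℕ) : ℕ := ∏ p ∈ m.primeFactors, p

/-!
Pairing each totative `m < n/2` of `n` with `n - m` matches the totatives of `n` with twice the
coprime pairs `x + y = n`, so `φ n = 2 * #{pairs}` and `∏_{m ⊥ n} rad m = ∏_{pairs} rad x * rad y`.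
Since `rad` is submultiplicative, `rad (x * y * n) ≤ rad x * rad y * rad n`, hence the product over
pairs, raised to `2 / φ n`, is at most `(∏_{m ⊥ n} rad m) ^ (2 / φ n) * rad n`. The hypothesis with
`ε = 2θ` then bounds `(∏_{m ⊥ n} rad m) ^ (2 / φ n)` below by `k * rad n ^ (-2θ) * n ^ 2`, and taking
square roots gives the claim with `K = √k`.
-/

open Finset Nat

lemma rad_pos (m : ℕ) : 0 < rad m :=
  prod_pos fun _ hp => (prime_of_mem_primeFactors hp).pos

lemma rad_mul_dvd {a b : ℕ} (ha : a ≠ 0) (hb : b ≠ 0) : rad (a * b) ∣ rad a * rad b := by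
  rw [rad, rad, rad, primeFactors_mul ha hb, ← prod_union_inter]
  exact dvd_mul_right _ _

def totatives (n : ℕ) : Finset ℕ := (Ico 1 n).filter (fun m => Nat.gcd m n = 1)

def lowerTotatives (n : ℕ) : Finset ℕ := (totatives n).filter (fun m => 2 * m < n)

def coprimePairs (n : ℕ) : Finset (ℕ × ℕ) :=
  ((range n) ×ˢ (range n)).filter
    (fun p => p.1 + p.2 = n ∧ 0 < p.1 ∧ p.1 < p.2 ∧ Nat.gcd p.1 p.2 = 1)

section Totatives

variable {n m : ℕ}

lemma mem_totatives : m ∈ totatives n ↔ 0 < m ∧ m < n ∧ Nat.gcd m n = 1 := by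
  simp only [totatives, mem_filter, mem_Ico, and_assoc]
  rfl

lemma mem_lowerTotatives : m ∈ lowerTotatives n ↔ 0 < m ∧ 2 * m < n ∧ Nat.gcd m n = 1 := by
  simp only [lowerTotatives, mem_filter, mem_totatives]
  constructor
  · rintro ⟨⟨hm, -, hg⟩, h2⟩; exact ⟨hm, h2, hg⟩
  · rintro ⟨hm, h2, hg⟩; exact ⟨⟨hm, by omega, hg⟩, h2⟩

lemma mem_coprimePairs {p : ℕ × ℕ} :
    p ∈ coprimePairs n ↔ p.1 + p.2 = n ∧ 0 < p.1 ∧ p.1 < p.2 ∧ Nat.gcd p.1 p.2 = 1 := by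
  simp only [coprimePairs, mem_filter, mem_product, mem_range, and_iff_right_iff_imp]
  omega

lemma card_totatives (hn : n ≠ 1) : #(totatives n) = φ n := by
  rw [totient_eq_card_coprime]
  congr 1
  ext m
  simp only [mem_totatives, mem_filter, mem_range, coprime_comm (m := n), Coprime]
  refine ⟨fun ⟨_, hmn, hg⟩ => ⟨hmn, hg⟩, fun ⟨hmn, hg⟩ => ⟨pos_of_ne_zero ?_, hmn, hg⟩⟩
  rintro rfl
  exact hn (by simpa using hg)

lemma filter_not_lt_totatives_eq_image (hn : n ≠ 2) :
    (totatives n).filter (fun m => ¬ 2 * m < n) = (lowerTotatives n).image (n - ·) := by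
  ext x
  simp only [mem_filter, mem_totatives, mem_image, mem_lowerTotatives]
  constructor
  · rintro ⟨⟨hx, hxn, hg⟩, hge⟩
    -- `2 * x = n` would force `x = gcd x n = 1`, i.e. `n = 2`.
    have hne : 2 * x ≠ n := by
      rintro rfl
      exact hn (by simp_all)
    exact ⟨n - x, ⟨by omega, by omega, by rwa [gcd_self_sub_left hxn.le]⟩, by omega⟩
  · rintro ⟨m, ⟨hm, h2m, hg⟩, rfl⟩
    exact ⟨⟨by omega, by omega, by rwa [gcd_self_sub_left (by omega)]⟩, by omega⟩

lemma injOn_sub_lowerTotatives : Set.InjOn (n - ·) (lowerTotatives n) := by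
  intro a ha b hb hab
  rw [mem_coe, mem_lowerTotatives] at ha hb
  exact (tsub_right_inj (by omega) (by omega)).1 hab

lemma prod_totatives_eq_prod_lowerTotatives {M : Type*} [CommMonoid M] (hn : n ≠ 2)
    (f : ℕ → M) : ∏ m ∈ totatives n, f m = ∏ m ∈ lowerTotatives n, f m * f (n - m) := by
  rw [← prod_filter_mul_prod_filter_not (totatives n) (fun m => 2 * m < n),
    filter_not_lt_totatives_eq_image hn, prod_image injOn_sub_lowerTotatives]
  exact prod_mul_distrib.symm

lemma totient_eq_two_mul_card_lowerTotatives (hn₁ : n ≠ 1) (hn₂ : n ≠ 2) :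
    φ n = 2 * #(lowerTotatives n) := by
  rw [← card_totatives hn₁, ← card_filter_add_card_filter_not (p := fun m => 2 * m < n),
    filter_not_lt_totatives_eq_image hn₂, Finset.card_image_of_injOn injOn_sub_lowerTotatives]
  exact (two_mul _).symm

lemma prod_coprimePairs {M : Type*} [CommMonoid M] (g : ℕ → ℕ → M) :
    ∏ p ∈ coprimePairs n, g p.1 p.2 = ∏ m ∈ lowerTotatives n, g m (n - m) := by
  refine prod_nbij' Prod.fst (fun m => (m, n - m)) ?_ ?_ ?_ ?_ ?_
  · intro p hp
    rw [mem_coprimePairs] at hp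
    obtain ⟨rfl, hp₁, hlt, hg⟩ := hp
    rw [mem_lowerTotatives, gcd_self_add_right]
    exact ⟨hp₁, by omega, hg⟩
  · intro m hm
    obtain ⟨hm, h2m, hg⟩ := mem_lowerTotatives.1 hm
    rw [mem_coprimePairs, gcd_sub_self_right (by omega)]
    exact ⟨by omega, hm, by omega, hg⟩
  · intro p hp
    obtain ⟨hsum, -⟩ := mem_coprimePairs.1 hp
    exact Prod.ext rfl (by omega)
  · intro m _
    rfl
  · intro p hp
    rw [← (mem_coprimePairs.1 hp).1, add_tsub_cancel_left]

end Totatives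

lemma prod_rad_coprimePairs_dvd {n : ℕ} (hn : n ≠ 2) :
    ∏ p ∈ coprimePairs n, rad (p.1 * p.2 * n) ∣
      (∏ m ∈ totatives n, rad m) * rad n ^ #(lowerTotatives n) := by
  calc ∏ p ∈ coprimePairs n, rad (p.1 * p.2 * n)
      ∣ ∏ p ∈ coprimePairs n, rad p.1 * rad p.2 * rad n := by
        refine prod_dvd_prod_of_dvd _ _ fun p hp => ?_
        obtain ⟨hsum, hp₁, hlt, -⟩ := mem_coprimePairs.1 hp
        exact (rad_mul_dvd (mul_ne_zero (by omega) (by omega)) (by omega)).trans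
          (mul_dvd_mul_right (rad_mul_dvd (by omega) (by omega)) _)
    _ = (∏ m ∈ totatives n, rad m) * rad n ^ #(lowerTotatives n) := by
        rw [prod_coprimePairs (fun x y => rad x * rad y * rad n), prod_mul_distrib, prod_const,
          prod_totatives_eq_prod_lowerTotatives hn]

lemma rpow_prod_rad_coprimePairs_le {n : ℕ} (hn : 2 < n) :
    (∏ p ∈ coprimePairs n, (rad (p.1 * p.2 * n) : ℝ)) ^ ((2 : ℝ) / φ n)
      ≤ ((∏ m ∈ totatives n, (rad m : ℝ)) ^ ((1 : ℝ) / φ n)) ^ 2 * rad n := by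
  set c := #(lowerTotatives n)
  have hφ : φ n = 2 * c := totient_eq_two_mul_card_lowerTotatives (by omega) (by omega)
  have hc : (c : ℝ) ≠ 0 := by
    have := totient_pos.2 (by omega : 0 < n)
    exact_mod_cast (by omega : c ≠ 0)
  have hP : 0 ≤ ∏ m ∈ totatives n, (rad m : ℝ) := by positivity
  have hR : (0 : ℝ) ≤ rad n := by positivity
  have hle : ∏ p ∈ coprimePairs n, (rad (p.1 * p.2 * n) : ℝ)
      ≤ (∏ m ∈ totatives n, (rad m : ℝ)) * (rad n : ℝ) ^ c := by
    exact_mod_cast le_of_dvd (mul_pos (prod_pos fun m _ => rad_pos m) (pow_pos (rad_pos n) _))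
       (prod_rad_coprimePairs_dvd hn.ne')
  calc (∏ p ∈ coprimePairs n, (rad (p.1 * p.2 * n) : ℝ)) ^ ((2 : ℝ) / φ n)
      ≤ ((∏ m ∈ totatives n, (rad m : ℝ)) * (rad n : ℝ) ^ c) ^ ((1 : ℝ) / c) := by
        rw [hφ, cast_mul, cast_ofNat, div_mul_cancel_left₀ two_ne_zero, one_div]
        exact Real.rpow_le_rpow (by positivity) hle (by positivity)
    _ = ((∏ m ∈ totatives n, (rad m : ℝ)) ^ ((1 : ℝ) / φ n)) ^ 2 * rad n := by
        rw [Real.mul_rpow hP (by positivity), ← Real.rpow_natCast_mul hR, mul_one_div_cancel hc,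
          Real.rpow_one, ← Real.rpow_mul_natCast hP, hφ]
        congr 2
        push_cast
        field_simp

lemma sqrt_mul_rpow_neg_mul_lt {k R N a θ : ℝ} (hk : 0 ≤ k) (hR : 0 < R) (ha : 0 ≤ a)
    (h : k * R ^ (1 - 2 * θ) * N ^ 2 < a ^ 2 * R) : √k * R ^ (-θ) * N < a := by
  have hsq : (√k * R ^ (-θ) * N) ^ 2 * R = k * R ^ (1 - 2 * θ) * N ^ 2 := by
    rw [show 1 - 2 * θ = -θ * (2 : ℕ) + 1 by push_cast; ring, Real.rpow_add_one hR.ne',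
      Real.rpow_mul_natCast hR.le, mul_pow, mul_pow, Real.sq_sqrt hk]
    ring
  rw [← hsq] at h
  exact lt_of_pow_lt_pow_left₀ 2 ha (lt_of_mul_lt_mul_right h hR.le)

theorem stmt5
    (h : ∀ ε : ℝ, 0 < ε → ∃ k : ℝ, 0 < k ∧ ∀ n : ℕ, 2 < n →
      ((∏ p ∈ ((Finset.range n) ×ˢ (Finset.range n)).filter
        (fun p => p.1 + p.2 = n ∧ 0 < p.1 ∧ p.1 < p.2 ∧ Nat.gcd p.1 p.2 = 1),
          (rad (p.1 * p.2 * n) : ℝ)) ^ ((2 : ℝ) / Nat.totient n))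
        > k * (rad n : ℝ) ^ ((1 : ℝ) - ε) * (n : ℝ) ^ 2) :
    ∀ θ : ℝ, 0 < θ → ∃ K : ℝ, 0 < K ∧ ∀ n : ℕ, 2 < n →
      ((∏ m ∈ (Finset.Ico 1 n).filter (fun m => Nat.gcd m n = 1),
        (rad m : ℝ)) ^ ((1 : ℝ) / Nat.totient n))
        > K * (rad n : ℝ) ^ (-θ) * n := by
  intro θ hθ
  obtain ⟨k, hk, hbound⟩ := h (2 * θ) (by positivity)
  refine ⟨√k, Real.sqrt_pos.2 hk, fun n hn => ?_⟩
  refine sqrt_mul_rpow_neg_mul_lt hk.le (by exact_mod_cast rad_pos n) (by positivity) ?_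
  exact (hbound n hn).trans_le (rpow_prod_rad_coprimePairs_le hn)
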